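/- For s ≥ 3, let W(x,y) = xy⁴xy⁵x⋯xy^{4+s}x and G_s = ⟨a, b, t | t⁻¹at = b, t⁻¹bt = W(b,a)·b·W(a,b)⁻¹⟩. Then G_s is isomorphic to F_n ⋊ ℤ for n = s + 4 + (8+s)(s+1)/2, where F_n is free of rank n. -/

import Mathlib

/-- The word `W(x,y) = x y⁴ x y⁵ x ⋯ x y^(4+s) x`. -/
def W {G : Type*} [Group G] (s : ℕ) (x y : G) : G :=
  x * (((List.range (s + 1)).map fun i => y ^ (4 + i) * x).prod)

/-- Generators: `0 = a`, `1 = b`, `2 = t`.  Relations of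
`⟨a, b, t | t⁻¹at = b, t⁻¹bt = W(b,a)·b·W(a,b)⁻¹⟩`. -/
def gsrels (s : ℕ) : Set (FreeGroup (Fin 3)) :=
  {(FreeGroup.of 2)⁻¹ * FreeGroup.of 0 * FreeGroup.of 2 * (FreeGroup.of 1)⁻¹,
   (FreeGroup.of 2)⁻¹ * FreeGroup.of 1 * FreeGroup.of 2 *
     (W s (FreeGroup.of 1) (FreeGroup.of 0) * FreeGroup.of 1 *
       (W s (FreeGroup.of 0) (FreeGroup.of 1))⁻¹)⁻¹}


/-!
The map `a, b, t ↦ 1` onto `ℤ` splits via `a`, and since `b = t⁻¹at` its kernel is generated by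
the Schreier generators `T k = a ^ k * t * a ^ (-k - 1)`. Rewriting the second relation and its
conjugates by powers of `a` in these generators gives, for every `k`, one relation among
`T (k - 2), …, T (k + c + 1)` (with `c = ∑ i ≤ s, (5 + i)`) in which both extreme generators occur
exactly once. So the kernel is free on `T 0, …, T (c + 2)`, which is `rank s` generators, and
conjugation by `a` is the automorphism `T j ↦ T (j + 1)`, whose value at `T (c + 2)` and whose
inverse at `T 0` are solved from the relations at `k = 2` and `k = 1`. We build this automorphism
of the free group of rank `rank s` and check that the two resulting homomorphisms between the
presented group and the semidirect product are mutually inverse.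
-/

namespace FreeByCyclic

-- `blockOffset j` is the exponent sum of the first `j` blocks `y ^ (4 + i) * x` of `W`.
def blockOffset : ℕ → ℕ
  | 0 => 0
  | i + 1 => blockOffset i + 5 + i

lemma blockOffset_succ (i : ℕ) : blockOffset (i + 1) = blockOffset i + 5 + i := rfl

lemma blockOffset_mono : Monotone blockOffset :=
  monotone_nat_of_le_succ fun i => by rw [blockOffset_succ]; omega

lemma two_mul_blockOffset (j : ℕ) : 2 * blockOffset j = j * (j + 9) := by
  induction j with
  | zero => rfl
  | succ j ih => rw [blockOffset_succ, mul_add, mul_add, ih]; ring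

def rank (s : ℕ) : ℕ := s + 4 + (8 + s) * (s + 1) / 2

lemma rank_eq (s : ℕ) : rank s = blockOffset (s + 1) + 3 := by
  have h : (8 + s) * (s + 1) + 2 * (s + 1) = 2 * blockOffset (s + 1) := by
    rw [two_mul_blockOffset]; ring
  unfold rank
  omega

section Words

variable {Q Q' F : Type*} [Group Q] [Group Q'] [FunLike F Q Q'] [MonoidHomClass F Q Q']

def partialW (j : ℕ) (x y : Q) : Q := x * ((List.range j).map fun i => y ^ (4 + i) * x).prod

lemma partialW_succ (j : ℕ) (x y : Q) :
    partialW (j + 1) x y = partialW j x y * (y ^ (4 + j) * x) := by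
  simp [partialW, List.range_succ, mul_assoc]

lemma map_W (ψ : Q →* Q') (s : ℕ) (x y : Q) : ψ (W s x y) = W s (ψ x) (ψ y) := by
  simp [W, map_list_prod, Function.comp_def]

def schreierGen (a t : Q) (k : ℤ) : Q := a ^ k * t * a ^ (-k - 1)

lemma map_schreierGen (ψ : Q →* Q') (a t : Q) (k : ℤ) :
    ψ (schreierGen a t k) = schreierGen (ψ a) (ψ t) k := by
  simp [schreierGen]

lemma conj_schreierGen (a t : Q) (d k : ℤ) :
    MulAut.conj (a ^ d) (schreierGen a t k) = schreierGen a t (k + d) := by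
  rw [MulAut.conj_apply, schreierGen, schreierGen]; group

def telescope (G : ℤ → Q) (p q : ℕ → ℤ) (j : ℕ) : Q :=
  ((List.range j).map fun i => (G (p i))⁻¹ * G (q i)).prod

lemma telescope_succ (G : ℤ → Q) (p q : ℕ → ℤ) (j : ℕ) :
    telescope G p q (j + 1) = telescope G p q j * ((G (p j))⁻¹ * G (q j)) := by
  simp [telescope, List.range_succ]

lemma map_telescope (ψ : F) (G : ℤ → Q) (p q : ℕ → ℤ) (j : ℕ) :
    ψ (telescope G p q j) = telescope (ψ ∘ G) p q j := by
  simp [telescope, map_list_prod, Function.comp_def]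

lemma telescope_congr {G G' : ℤ → Q} {p q : ℕ → ℤ} {j : ℕ}
    (h : ∀ i < j, G (p i) = G' (p i) ∧ G (q i) = G' (q i)) :
    telescope G p q j = telescope G' p q j := by
  unfold telescope
  congr 1
  refine List.map_congr_left fun i hi => ?_
  obtain ⟨hp, hq⟩ := h i (List.mem_range.mp hi)
  rw [hp, hq]

section Rewriting

variable {a b t : Q}

lemma zpow_mul_pow_eq (hb : b = t⁻¹ * a * t) (k : ℤ) (q : ℕ) :
    a ^ k * b ^ q =
      (schreierGen a t (k - 1))⁻¹ * schreierGen a t (k + q - 1) * a ^ (k + q) := by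
  have hbq : b ^ q = t⁻¹ * a ^ q * t := by
    rw [hb]; simpa using conj_pow (a := t⁻¹) (b := a) (i := q)
  rw [hbq, schreierGen, schreierGen]
  group

lemma zpow_mul_partialW_ab (hb : b = t⁻¹ * a * t) (k : ℤ) (j : ℕ) :
    a ^ k * partialW j a b =
      telescope (schreierGen a t) (fun i => k + blockOffset i)
        (fun i => k + blockOffset i + 4 + i) j * a ^ (k + 1 + blockOffset j) := by
  induction j with
  | zero => simp [partialW, telescope, blockOffset, zpow_add_one]
  | succ j ih =>
    calc a ^ k * partialW (j + 1) a b
        = (a ^ k * partialW j a b) * (a ^ (k + 1 + blockOffset j))⁻¹ *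
            (a ^ (k + 1 + blockOffset j) * b ^ (4 + j)) * a := by
          rw [partialW_succ]; group
      _ = _ := by
          rw [ih, zpow_mul_pow_eq hb, telescope_succ, blockOffset_succ]
          push_cast
          -- `group` ends with `ring_nf`, which also identifies the shifted indices.
          group

lemma zpow_mul_partialW_ba (hb : b = t⁻¹ * a * t) (k : ℤ) (j : ℕ) :
    a ^ k * partialW j b a =
      telescope (schreierGen a t) (fun i => k + blockOffset i - 1)
        (fun i => k + blockOffset i) (j + 1) * a ^ (k + 1 + blockOffset j) := by
  induction j with
  | zero =>
    simpa [partialW, telescope, blockOffset] using zpow_mul_pow_eq hb k 1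
  | succ j ih =>
    calc a ^ k * partialW (j + 1) b a
        = (a ^ k * partialW j b a) * (a ^ (k + 1 + blockOffset j))⁻¹ *
            (a ^ (k + 1 + blockOffset j) * a ^ (4 + j) * b ^ 1) := by
          rw [partialW_succ]; group
      _ = _ := by
          rw [ih, ← zpow_natCast a (4 + j), ← zpow_add, zpow_mul_pow_eq hb,
            telescope_succ (j := j + 1), blockOffset_succ]
          push_cast
          group

end Rewriting

end Words

section FiberRelation

open Set

variable {Q Q' F : Type*} [Group Q] [Group Q'] [FunLike F Q Q'] [MonoidHomClass F Q Q'] (s : ℕ)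

def relV (G : ℤ → Q) (k : ℤ) : Q :=
  telescope G (fun i => k + blockOffset i - 1) (fun i => k + blockOffset i) (s + 2)

def relU (G : ℤ → Q) (k : ℤ) : Q :=
  telescope G (fun i => k + blockOffset i) (fun i => k + blockOffset i + 4 + i) (s + 1)

def relLHS (G : ℤ → Q) (k : ℤ) : Q := (G (k - 1))⁻¹ * (G (k - 2))⁻¹ * G (k - 1) * G k

def relRHS (G : ℤ → Q) (k : ℤ) : Q :=
  relV s G k * (G (k + blockOffset (s + 1)))⁻¹ * G (k + blockOffset (s + 1) + 1) *
    (relU s G (k + 1))⁻¹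

-- For `G = schreierGen a t` this is the relation `t⁻¹bt = W(b,a) b W(a,b)⁻¹` conjugated by
-- `a ^ k` and rewritten in the Schreier generators.
def FiberRel (G : ℤ → Q) (k : ℤ) : Prop := relLHS G k = relRHS s G k

def fiberTop (G : ℤ → Q) (k : ℤ) : Q :=
  G (k + blockOffset (s + 1)) * (relV s G k)⁻¹ * relLHS G k * relU s G (k + 1)

def fiberBot (G : ℤ → Q) (k : ℤ) : Q :=
  G (k - 1) * G k * relU s G (k + 1) * (G (k + blockOffset (s + 1) + 1))⁻¹ *
    G (k + blockOffset (s + 1)) * (relV s G k)⁻¹ * (G (k - 1))⁻¹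

variable {s}

lemma fiberRel_iff_top {G : ℤ → Q} {k : ℤ} :
    FiberRel s G k ↔ G (k + blockOffset (s + 1) + 1) = fiberTop s G k := by
  rw [FiberRel, relRHS, fiberTop]
  constructor <;> intro h <;> rw [h] <;> group

lemma fiberRel_iff_bot {G : ℤ → Q} {k : ℤ} :
    FiberRel s G k ↔ G (k - 2) = fiberBot s G k := by
  rw [FiberRel, relRHS, relLHS, fiberBot]
  constructor
  · intro h
    calc G (k - 2)
        = G (k - 1) * G k * ((G (k - 1))⁻¹ * (G (k - 2))⁻¹ * G (k - 1) * G k)⁻¹ *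
            (G (k - 1))⁻¹ := by group
      _ = _ := by rw [h]; group
  · intro h
    rw [h]; group

lemma relV_congr {G G' : ℤ → Q} {k : ℤ}
    (h : EqOn G G' (Icc (k - 1) (k + blockOffset (s + 1)))) : relV s G k = relV s G' k :=
  telescope_congr fun i hi => by
    have := blockOffset_mono (Nat.lt_succ_iff.mp hi)
    exact ⟨h ⟨by omega, by omega⟩, h ⟨by omega, by omega⟩⟩

lemma relU_congr {G G' : ℤ → Q} {k : ℤ}
    (h : EqOn G G' (Icc k (k + blockOffset (s + 1) - 1))) : relU s G k = relU s G' k :=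
  telescope_congr fun i hi => by
    have := blockOffset_mono (Nat.lt_succ_iff.mp hi)
    have := blockOffset_succ s
    exact ⟨h ⟨by omega, by omega⟩, h ⟨by omega, by omega⟩⟩

lemma fiberTop_congr {G G' : ℤ → Q} {k : ℤ}
    (h : EqOn G G' (Icc (k - 2) (k + blockOffset (s + 1)))) :
    fiberTop s G k = fiberTop s G' k := by
  rw [fiberTop, fiberTop, relLHS, relLHS,
    relV_congr (h.mono (Icc_subset_Icc (by omega) le_rfl)),
    relU_congr (h.mono (Icc_subset_Icc (by omega) (by omega))),
    @h (k - 2) ⟨le_rfl, by omega⟩, @h (k - 1) ⟨by omega, by omega⟩, @h k ⟨by omega, by omega⟩,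
    @h (k + blockOffset (s + 1)) ⟨by omega, le_rfl⟩]

lemma fiberBot_congr {G G' : ℤ → Q} {k : ℤ}
    (h : EqOn G G' (Icc (k - 1) (k + blockOffset (s + 1) + 1))) :
    fiberBot s G k = fiberBot s G' k := by
  rw [fiberBot, fiberBot,
    relV_congr (h.mono (Icc_subset_Icc le_rfl (by omega))),
    relU_congr (h.mono (Icc_subset_Icc (by omega) (by omega))),
    @h (k - 1) ⟨le_rfl, by omega⟩, @h k ⟨by omega, by omega⟩,
    @h (k + blockOffset (s + 1)) ⟨by omega, by omega⟩,
    @h (k + blockOffset (s + 1) + 1) ⟨by omega, le_rfl⟩]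

lemma FiberRel.congr {G G' : ℤ → Q} {k : ℤ}
    (h : EqOn G G' (Icc (k - 2) (k + blockOffset (s + 1) + 1))) (hG : FiberRel s G k) :
    FiberRel s G' k := by
  rw [fiberRel_iff_top] at hG ⊢
  rw [← h ⟨by omega, le_rfl⟩, hG,
    fiberTop_congr (h.mono (Icc_subset_Icc le_rfl (by omega)))]

lemma fiberTop_comp_add (G : ℤ → Q) (k d : ℤ) :
    fiberTop s (fun m => G (m + d)) k = fiberTop s G (k + d) := by
  simp only [fiberTop, relLHS, relV, relU, telescope]
  ring_nf

lemma fiberBot_comp_add (G : ℤ → Q) (k d : ℤ) :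
    fiberBot s (fun m => G (m + d)) k = fiberBot s G (k + d) := by
  simp only [fiberBot, relV, relU, telescope]
  ring_nf

lemma fiberRel_comp_add {G : ℤ → Q} {k d : ℤ} :
    FiberRel s (fun m => G (m + d)) k ↔ FiberRel s G (k + d) := by
  rw [fiberRel_iff_top, fiberRel_iff_top, fiberTop_comp_add]
  ring_nf

lemma FiberRel.map (ψ : F) {G : ℤ → Q} {k : ℤ} (h : FiberRel s G k) : FiberRel s (ψ ∘ G) k := by
  have := congrArg ψ h
  simpa only [FiberRel, relLHS, relRHS, relV, relU, map_mul, map_inv, map_telescope,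
    Function.comp_apply] using this

lemma map_fiberTop (ψ : F) (G : ℤ → Q) (k : ℤ) :
    ψ (fiberTop s G k) = fiberTop s (ψ ∘ G) k := by
  simp only [fiberTop, relLHS, relV, relU, map_mul, map_inv, map_telescope, Function.comp_apply]

lemma map_fiberBot (ψ : F) (G : ℤ → Q) (k : ℤ) :
    ψ (fiberBot s G k) = fiberBot s (ψ ∘ G) k := by
  simp only [fiberBot, relV, relU, map_mul, map_inv, map_telescope, Function.comp_apply]

end FiberRelation

section Relator

variable {Q : Type*} [Group Q] {s : ℕ} {a b t : Q}

lemma conj_eq_relLHS (hb : b = t⁻¹ * a * t) :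
    t⁻¹ * b * t = relLHS (schreierGen a t) 0 * a := by
  rw [hb, relLHS, schreierGen, schreierGen, schreierGen]
  group

lemma W_mul_eq_relRHS (hb : b = t⁻¹ * a * t) :
    W s b a * b * (W s a b)⁻¹ = relRHS s (schreierGen a t) 0 * a := by
  have hba := zpow_mul_partialW_ba hb 0 (s + 1)
  have hab := zpow_mul_partialW_ab hb 1 (s + 1)
  have hb1 := zpow_mul_pow_eq hb (1 + blockOffset (s + 1)) 1
  rw [zpow_zero, one_mul] at hba
  rw [zpow_one] at hab
  rw [pow_one] at hb1
  calc W s b a * b * (W s a b)⁻¹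
      = partialW (s + 1) b a * b * (a * partialW (s + 1) a b)⁻¹ * a := by
        rw [W, W, partialW, partialW]; group
    _ = relV s (schreierGen a t) 0 * (a ^ (1 + blockOffset (s + 1) : ℤ) * b) *
          (telescope (schreierGen a t) (fun i => 1 + blockOffset i)
            (fun i => 1 + blockOffset i + 4 + i) (s + 1) *
              a ^ (1 + 1 + blockOffset (s + 1) : ℤ))⁻¹ * a := by
        rw [hba, hab, relV]; group
    _ = relRHS s (schreierGen a t) 0 * a := by
        rw [hb1, relRHS, relU]
        simp only [zero_add]
        group

lemma conj_eq_W_iff_fiberRel (hb : b = t⁻¹ * a * t) :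
    t⁻¹ * b * t = W s b a * b * (W s a b)⁻¹ ↔ FiberRel s (schreierGen a t) 0 := by
  rw [conj_eq_relLHS hb, W_mul_eq_relRHS hb, mul_left_inj, FiberRel]

end Relator

lemma zpow_apply_of_semiconj {M N : Type*} [Group M] [Group N] (f : M →* N) {e : MulAut M}
    {c : MulAut N} (h : ∀ x, f (e x) = c (f x)) (d : ℤ) (x : M) :
    f ((e ^ d) x) = (c ^ d) (f x) := by
  induction d using Int.induction_on generalizing x with
  | zero => rfl
  | succ d ih => rw [zpow_add_one, zpow_add_one, MulAut.mul_apply, MulAut.mul_apply, ih, h]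
  | pred d ih =>
    have hinv : f (e⁻¹ x) = c⁻¹ (f x) := by
      rw [← MulAut.inv_apply_self N c (f (e⁻¹ x)), ← h, MulAut.apply_inv_self]
    rw [sub_eq_add_neg, zpow_add, zpow_add, zpow_neg_one, zpow_neg_one, MulAut.mul_apply,
      MulAut.mul_apply, ih, hinv]

section IntIndexing

open Set

variable {n : ℕ} {Q : Type*} [Group Q]

-- The `j`-th basis element, with the junk value `1` outside `[0, n)`.
def gen (n : ℕ) (j : ℤ) : FreeGroup (Fin n) :=
  if h : 0 ≤ j ∧ j < n then FreeGroup.of ⟨j.toNat, by omega⟩ else 1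

lemma gen_natCast (x : Fin n) : gen n x = FreeGroup.of x := by
  rw [gen, dif_pos ⟨Int.natCast_nonneg _, by exact_mod_cast x.2⟩]
  simp

def liftInt (G : ℤ → Q) : FreeGroup (Fin n) →* Q := FreeGroup.lift fun x => G x

lemma liftInt_gen (G : ℤ → Q) : EqOn (liftInt G ∘ gen n) G (Ico 0 n) := by
  intro j hj
  obtain ⟨x, rfl⟩ : ∃ x : Fin n, (x : ℤ) = j := ⟨⟨j.toNat, by grind⟩, by grind⟩
  simp [gen_natCast, liftInt]

lemma hom_ext_gen {f g : FreeGroup (Fin n) →* Q}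
    (h : EqOn (f ∘ gen n) (g ∘ gen n) (Ico 0 n)) : f = g :=
  FreeGroup.ext_hom _ _ fun x => by
    simpa [gen_natCast] using @h x ⟨Int.natCast_nonneg _, by exact_mod_cast x.2⟩

end IntIndexing

section Shift

open Set

variable (s : ℕ)

abbrev Fiber := FreeGroup (Fin (rank s))

-- `gen` extended to index `rank s` (resp. `-1`) by the value that `FiberRel s · 2`
-- (resp. `FiberRel s · 1`) forces there.
def upper : ℤ → Fiber s :=
  Function.update (gen (rank s)) (rank s) (fiberTop s (gen (rank s)) 2)

def lower : ℤ → Fiber s :=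
  Function.update (gen (rank s)) (-1) (fiberBot s (gen (rank s)) 1)

def shiftUp : Fiber s →* Fiber s := liftInt fun m => upper s (m + 1)

def shiftDown : Fiber s →* Fiber s := liftInt fun m => lower s (m - 1)

variable {s}

lemma upper_eq_gen : EqOn (upper s) (gen (rank s)) {(rank s : ℤ)}ᶜ :=
  fun _ hm => Function.update_of_ne hm _ _

lemma lower_eq_gen : EqOn (lower s) (gen (rank s)) {-1}ᶜ :=
  fun _ hm => Function.update_of_ne hm _ _

lemma fiberRel_upper : FiberRel s (upper s) 2 := by
  have hr := rank_eq s
  rw [fiberRel_iff_top, fiberTop_congr (G' := gen (rank s)) (upper_eq_gen.mono fun m hm => ?_),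
    upper, show (2 : ℤ) + blockOffset (s + 1) + 1 = rank s by omega, Function.update_self]
  simp only [mem_Icc, mem_compl_iff, mem_singleton_iff] at hm ⊢
  omega

lemma fiberRel_lower : FiberRel s (lower s) 1 := by
  rw [fiberRel_iff_bot, fiberBot_congr (G' := gen (rank s)) (lower_eq_gen.mono fun m hm => ?_),
    lower, show (1 : ℤ) - 2 = -1 by norm_num, Function.update_self]
  simp only [mem_Icc, mem_compl_iff, mem_singleton_iff] at hm ⊢
  omega

lemma shiftDown_upper :
    EqOn (shiftDown s ∘ upper s) (fun m => lower s (m - 1)) (Icc 0 (rank s)) := by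
  have hr := rank_eq s
  rintro m ⟨h0, h1⟩
  rcases eq_or_ne m (rank s) with rfl | hne
  · calc shiftDown s (upper s (rank s))
        = fiberTop s (shiftDown s ∘ gen (rank s)) 2 := by
          rw [upper, Function.update_self, map_fiberTop]
      _ = fiberTop s (fun m => lower s (m + -1)) 2 :=
          fiberTop_congr ((liftInt_gen _).mono (Icc_subset_Ico_right (by omega)))
      _ = lower s (1 + blockOffset (s + 1) + 1) := by
          rw [fiberTop_comp_add, fiberRel_iff_top.mp fiberRel_lower]; norm_num
      _ = lower s (rank s - 1) := congrArg _ (by omega)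
  · rw [Function.comp_apply, upper_eq_gen hne]
    exact liftInt_gen _ ⟨h0, lt_of_le_of_ne h1 hne⟩

lemma shiftUp_lower :
    EqOn (shiftUp s ∘ lower s) (fun m => upper s (m + 1)) (Icc (-1) (rank s - 1)) := by
  have hr := rank_eq s
  rintro m ⟨h0, h1⟩
  rcases eq_or_ne m (-1) with rfl | hne
  · calc shiftUp s (lower s (-1))
        = fiberBot s (shiftUp s ∘ gen (rank s)) 1 := by
          rw [lower, Function.update_self, map_fiberBot]
      _ = fiberBot s (fun m => upper s (m + 1)) 1 :=
          fiberBot_congr ((liftInt_gen _).mono (Icc_subset_Ico (by omega) (by omega)))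
      _ = upper s (-1 + 1) := by
          rw [fiberBot_comp_add, one_add_one_eq_two, ← fiberRel_iff_bot.mp fiberRel_upper]
          norm_num
  · rw [Function.comp_apply, lower_eq_gen hne]
    exact liftInt_gen _ ⟨by omega, by omega⟩

lemma shiftDown_comp_shiftUp : (shiftDown s).comp (shiftUp s) = MonoidHom.id _ := by
  have hr := rank_eq s
  refine hom_ext_gen fun j hj => ?_
  obtain ⟨h0, h1⟩ := hj
  have hup : shiftUp s (gen _ j) = upper s (j + 1) := liftInt_gen _ ⟨h0, h1⟩
  simp only [Function.comp_apply, MonoidHom.comp_apply, MonoidHom.id_apply, hup]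
  rw [← Function.comp_apply (f := shiftDown s), shiftDown_upper ⟨by omega, by omega⟩]
  simp only [add_sub_cancel_right]
  exact lower_eq_gen (by simp only [mem_compl_iff, mem_singleton_iff]; omega)

lemma shiftUp_comp_shiftDown : (shiftUp s).comp (shiftDown s) = MonoidHom.id _ := by
  have hr := rank_eq s
  refine hom_ext_gen fun j hj => ?_
  obtain ⟨h0, h1⟩ := hj
  have hdown : shiftDown s (gen _ j) = lower s (j - 1) := liftInt_gen _ ⟨h0, h1⟩
  simp only [Function.comp_apply, MonoidHom.comp_apply, MonoidHom.id_apply, hdown]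
  rw [← Function.comp_apply (f := shiftUp s), shiftUp_lower ⟨by omega, by omega⟩]
  simp only [sub_add_cancel]
  exact upper_eq_gen (by simp only [mem_compl_iff, mem_singleton_iff]; omega)

variable (s)

def shiftAut : MulAut (Fiber s) :=
  MonoidHom.toMulEquiv (shiftUp s) (shiftDown s) shiftDown_comp_shiftUp shiftUp_comp_shiftDown

def orbit (m : ℤ) : Fiber s := (shiftAut s ^ m) (gen (rank s) 0)

variable {s}

lemma zpow_shiftAut_orbit (d m : ℤ) : (shiftAut s ^ d) (orbit s m) = orbit s (m + d) := by
  rw [orbit, orbit, ← MulAut.mul_apply, ← zpow_add, add_comm]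

lemma orbit_eq_lower : EqOn (orbit s) (lower s) (Icc (-1) (rank s - 1)) := by
  have hr := rank_eq s
  rintro m ⟨h0, h1⟩
  rcases h0.eq_or_lt with rfl | hm
  · have h : shiftDown s (gen _ 0) = lower s (0 - 1) := liftInt_gen _ ⟨le_rfl, by omega⟩
    rwa [orbit, zpow_neg_one]
  obtain hm0 : 0 ≤ m := by omega
  clear h0 hm
  induction m, hm0 using Int.leInduction with
  | base => simp [orbit, lower_eq_gen (show (0 : ℤ) ∈ ({-1} : Set ℤ)ᶜ by simp)]
  | succ m hm0 ih =>
    rw [← zpow_shiftAut_orbit 1, ih (by omega), zpow_one]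
    rw [show shiftAut s (lower s m) = upper s (m + 1) from shiftUp_lower ⟨by omega, by omega⟩,
      upper_eq_gen (by simp only [mem_compl_iff, mem_singleton_iff]; omega),
      lower_eq_gen (by simp only [mem_compl_iff, mem_singleton_iff]; omega)]

lemma fiberRel_orbit (k : ℤ) : FiberRel s (orbit s) k := by
  have hr := rank_eq s
  have h1 : FiberRel s (orbit s) 1 :=
    fiberRel_lower.congr (orbit_eq_lower.symm.mono (Icc_subset_Icc (by norm_num) (by omega)))
  have hk := h1.map (shiftAut s ^ (k - 1))
  rw [show ⇑(shiftAut s ^ (k - 1)) ∘ orbit s = fun m => orbit s (m + (k - 1)) from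
    funext fun m => zpow_shiftAut_orbit _ m, fiberRel_comp_add] at hk
  rwa [add_sub_cancel] at hk

end Shift

section SemidirectProduct

open SemidirectProduct

variable (s : ℕ)

def shiftAction : Multiplicative ℤ →* MulAut (Fiber s) := zpowersHom _ (shiftAut s)

def sdA : Fiber s ⋊[shiftAction s] Multiplicative ℤ := inr (.ofAdd 1)

def sdT : Fiber s ⋊[shiftAction s] Multiplicative ℤ := inl (gen _ 0) * sdA s

lemma schreierGen_sdA_sdT (k : ℤ) : schreierGen (sdA s) (sdT s) k = inl (orbit s k) := by
  have hconj : sdA s ^ k * inl (gen _ 0) * (sdA s ^ k)⁻¹ = inl (orbit s k) := by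
    rw [sdA, ← map_zpow, ← map_inv, ← inl_aut]
    simp [shiftAction, orbit]
  calc schreierGen (sdA s) (sdT s) k
      = (sdA s ^ k * inl (gen _ 0) * (sdA s ^ k)⁻¹) *
          (sdA s ^ k * sdA s * sdA s ^ (-k - 1)) := by
        rw [schreierGen, sdT]; group
    _ = inl (orbit s k) := by rw [hconj]; group

lemma sdT_conj_eq_W :
    (sdT s)⁻¹ * ((sdT s)⁻¹ * sdA s * sdT s) * sdT s =
      W s ((sdT s)⁻¹ * sdA s * sdT s) (sdA s) * ((sdT s)⁻¹ * sdA s * sdT s) *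
        (W s (sdA s) ((sdT s)⁻¹ * sdA s * sdT s))⁻¹ := by
  refine (conj_eq_W_iff_fiberRel rfl).mpr ?_
  rw [show schreierGen (sdA s) (sdT s) = inl ∘ orbit s from funext (schreierGen_sdA_sdT s)]
  exact (fiberRel_orbit 0).map inl

end SemidirectProduct

section Presented

open Set

variable (s : ℕ)

def presA : PresentedGroup (gsrels s) := .of 0

def presB : PresentedGroup (gsrels s) := .of 1

def presT : PresentedGroup (gsrels s) := .of 2

variable {s}

lemma presB_eq : presB s = (presT s)⁻¹ * presA s * presT s := by
  have h := PresentedGroup.mk_eq_mk_of_mul_inv_mem (rels := gsrels s) (mem_insert _ _)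
  simp only [map_mul, map_inv] at h
  exact h.symm

lemma presT_conj_presB :
    (presT s)⁻¹ * presB s * presT s =
      W s (presB s) (presA s) * presB s * (W s (presA s) (presB s))⁻¹ := by
  have h := PresentedGroup.mk_eq_mk_of_mul_inv_mem (rels := gsrels s) (mem_insert_of_mem _ rfl)
  simp only [map_mul, map_inv, map_W] at h
  exact h

lemma fiberRel_presented (k : ℤ) : FiberRel s (schreierGen (presA s) (presT s)) k := by
  have hk := ((conj_eq_W_iff_fiberRel presB_eq).mp presT_conj_presB).map
    (MulAut.conj (presA s ^ k))
  rw [show ⇑(MulAut.conj (presA s ^ k)) ∘ schreierGen (presA s) (presT s) =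
      fun m => schreierGen (presA s) (presT s) (m + k) from
    funext (conj_schreierGen _ _ k), fiberRel_comp_add, zero_add] at hk
  exact hk

variable (s)

def fromFiber : Fiber s →* PresentedGroup (gsrels s) :=
  liftInt (schreierGen (presA s) (presT s))

variable {s}

lemma fromFiber_upper :
    EqOn (fromFiber s ∘ upper s) (schreierGen (presA s) (presT s)) (Icc 0 (rank s)) := by
  have hr := rank_eq s
  rintro m ⟨h0, h1⟩
  rcases eq_or_ne m (rank s) with rfl | hne
  · calc fromFiber s (upper s (rank s))
        = fiberTop s (fromFiber s ∘ gen (rank s)) 2 := by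
          rw [upper, Function.update_self, map_fiberTop]
      _ = fiberTop s (schreierGen (presA s) (presT s)) 2 :=
          fiberTop_congr ((liftInt_gen _).mono (Icc_subset_Ico_right (by omega)))
      _ = schreierGen (presA s) (presT s) (rank s) := by
          rw [← fiberRel_iff_top.mp (fiberRel_presented 2)]; congr 1; omega
  · rw [Function.comp_apply, upper_eq_gen hne]
    exact liftInt_gen _ ⟨h0, lt_of_le_of_ne h1 hne⟩

lemma fromFiber_shiftAut (x : Fiber s) :
    fromFiber s (shiftAut s x) = MulAut.conj (presA s) (fromFiber s x) := by
  have hr := rank_eq s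
  have h : (fromFiber s).comp (shiftUp s) =
      (MulAut.conj (presA s)).toMonoidHom.comp (fromFiber s) :=
    hom_ext_gen fun j ⟨h0, h1⟩ => by
      have hup : shiftUp s (gen _ j) = upper s (j + 1) := liftInt_gen _ ⟨h0, h1⟩
      have hj : fromFiber s (gen _ j) = schreierGen (presA s) (presT s) j :=
        liftInt_gen _ ⟨h0, h1⟩
      simp only [Function.comp_apply, MonoidHom.comp_apply, MulEquiv.coe_toMonoidHom, hup, hj]
      rw [← Function.comp_apply (f := fromFiber s), fromFiber_upper ⟨by omega, by omega⟩,
        ← conj_schreierGen _ _ 1, zpow_one]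
  exact DFunLike.congr_fun h x

end Presented

section Isomorphism

open SemidirectProduct

variable (s : ℕ)

def sdGens : Fin 3 → Fiber s ⋊[shiftAction s] Multiplicative ℤ :=
  ![sdA s, (sdT s)⁻¹ * sdA s * sdT s, sdT s]

lemma sdGens_rels : ∀ r ∈ gsrels s, FreeGroup.lift (sdGens s) r = 1 := by
  rintro r (rfl | rfl)
  · simp [sdGens]
  · simp only [map_mul, map_inv, map_W, FreeGroup.lift_apply_of]
    exact mul_inv_eq_one.mpr (sdT_conj_eq_W s)

def toSemidirect : PresentedGroup (gsrels s) →* Fiber s ⋊[shiftAction s] Multiplicative ℤ :=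
  PresentedGroup.toGroup (sdGens_rels s)

def fromSemidirect : Fiber s ⋊[shiftAction s] Multiplicative ℤ →* PresentedGroup (gsrels s) :=
  lift (fromFiber s) (zpowersHom _ (presA s)) fun g => MonoidHom.ext fun x => by
    simp [shiftAction, zpow_apply_of_semiconj (fromFiber s) fromFiber_shiftAut, map_zpow]

lemma fromSemidirect_sdA : fromSemidirect s (sdA s) = presA s := by
  simp [fromSemidirect, sdA]

lemma fromSemidirect_sdT : fromSemidirect s (sdT s) = presT s := by
  have hr := rank_eq s
  have h0 : fromFiber s (gen _ 0) = schreierGen (presA s) (presT s) 0 :=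
    liftInt_gen _ ⟨le_rfl, by omega⟩
  rw [sdT, map_mul, fromSemidirect_sdA, fromSemidirect, lift_inl, h0, schreierGen]
  group

lemma fromSemidirect_comp_toSemidirect :
    (fromSemidirect s).comp (toSemidirect s) = MonoidHom.id _ := by
  refine PresentedGroup.ext fun i => ?_
  simp only [MonoidHom.comp_apply, toSemidirect, PresentedGroup.toGroup.of, MonoidHom.id_apply]
  fin_cases i
  · exact fromSemidirect_sdA s
  · show fromSemidirect s ((sdT s)⁻¹ * sdA s * sdT s) = presB s
    rw [map_mul, map_mul, map_inv, fromSemidirect_sdA, fromSemidirect_sdT, presB_eq]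
  · exact fromSemidirect_sdT s

lemma toSemidirect_comp_fromSemidirect :
    (toSemidirect s).comp (fromSemidirect s) = MonoidHom.id _ := by
  have hr := rank_eq s
  have hA : toSemidirect s (presA s) = sdA s := PresentedGroup.toGroup.of _
  have hT : toSemidirect s (presT s) = sdT s := PresentedGroup.toGroup.of _
  refine hom_ext (hom_ext_gen fun j ⟨h0, h1⟩ => ?_) (MonoidHom.ext_mint ?_)
  · have hj : fromFiber s (gen _ j) = schreierGen (presA s) (presT s) j := liftInt_gen _ ⟨h0, h1⟩
    simp only [Function.comp_apply, MonoidHom.comp_apply, MonoidHom.id_apply, fromSemidirect,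
      lift_inl, hj, map_schreierGen, hA, hT, schreierGen_sdA_sdT]
    rw [orbit_eq_lower ⟨by omega, by omega⟩,
      lower_eq_gen (by simp only [Set.mem_compl_iff, Set.mem_singleton_iff]; omega)]
  · simp only [MonoidHom.comp_apply, MonoidHom.id_apply]
    rw [← sdA, fromSemidirect_sdA, hA]

def mulEquivSemidirect : PresentedGroup (gsrels s) ≃* Fiber s ⋊[shiftAction s] Multiplicative ℤ :=
  MonoidHom.toMulEquiv _ _ (fromSemidirect_comp_toSemidirect s) (toSemidirect_comp_fromSemidirect s)

end Isomorphism

end FreeByCyclic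

theorem stmt_16_general (s : ℕ) :
    ∃ φ : Multiplicative ℤ →* MulAut (FreeGroup (Fin (s + 4 + (8 + s) * (s + 1) / 2))),
      Nonempty (PresentedGroup (gsrels s) ≃*
        FreeGroup (Fin (s + 4 + (8 + s) * (s + 1) / 2)) ⋊[φ] Multiplicative ℤ) :=
  ⟨FreeByCyclic.shiftAction s, ⟨FreeByCyclic.mulEquivSemidirect s⟩⟩

theorem stmt_16 (s : ℕ) (hs : 3 ≤ s) :
    ∃ φ : Multiplicative ℤ →* MulAut (FreeGroup (Fin (s + 4 + (8 + s) * (s + 1) / 2))),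
      Nonempty (PresentedGroup (gsrels s) ≃*
        FreeGroup (Fin (s + 4 + (8 + s) * (s + 1) / 2)) ⋊[φ] Multiplicative ℤ) :=
  stmt_16_general s
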